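/- (Addition formula) For every integer n ≥ 0, every integer r ≥ 1, all integers k_1,…,k_r, all positive reals a, b, c with ab > 1, and all reals x, y, one has B_n^{(k_1,…,k_r)}(x+y;a,b,c) = ∑_{i=0}^{n} C(n,i) (r·ln c)^{n−i} B_i^{(k_1,…,k_r)}(x;a,b,c) y^{n−i}. -/

import Mathlib

/-!
Shifting `x` to `x + y` multiplies the generating function by `c ^ (r y t) = exp (r y log c · t)`.
The Cauchy product of the generating series of `B_i(x)` with the exponential series is the
binomial convolution on the right-hand side, and two power series that agree on a punctured
neighbourhood of `0` have the same coefficients.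
-/

open Nat Finset Filter
open scoped Topology NNReal ENNReal

noncomputable def multiPolylog (r : ℕ) (k : Fin r → ℤ) (z : ℝ) : ℝ :=
  ∑' m : Fin r → ℕ, if StrictMono m ∧ ∀ i, 0 < m i then
    z ^ (Finset.univ.sup m) / ∏ j, ((m j : ℝ) ^ (k j)) else 0

namespace FormalMultilinearSeries

lemma le_radius_ofScalars_of_summable {A : ℕ → ℝ} {ρ : ℝ}
    (h : Summable fun n => A n * ρ ^ n) : (‖ρ‖₊ : ℝ≥0∞) ≤ (ofScalars ℝ A).radius := by
  refine le_radius_of_tendsto _ (l := 0) ?_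
  simpa only [ofScalars_norm, coe_nnnorm, norm_mul, norm_pow, norm_zero] using
    h.tendsto_atTop_zero.norm

end FormalMultilinearSeries

open FormalMultilinearSeries

lemma summable_norm_mul_pow_of_abs_lt {A : ℕ → ℝ} {ρ t : ℝ}
    (h : Summable fun n => A n * ρ ^ n) (ht : |t| < |ρ|) :
    Summable fun n => ‖A n * t ^ n‖ := by
  have hlt : (‖t‖₊ : ℝ≥0∞) < (ofScalars ℝ A).radius :=
    lt_of_lt_of_le (by exact_mod_cast ht) (le_radius_ofScalars_of_summable h)
  simpa only [ofScalars_norm, coe_nnnorm, norm_mul, norm_pow] using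
    (ofScalars ℝ A).summable_norm_mul_pow hlt

lemma eq_of_hasSum_mul_pow_of_ne_zero {A A' : ℕ → ℝ} {f : ℝ → ℝ} {ε : ℝ} (hε : 0 < ε)
    (hA : ∀ t, t ≠ 0 → |t| < ε → HasSum (fun n => A n * t ^ n) (f t))
    (hA' : ∀ t, t ≠ 0 → |t| < ε → HasSum (fun n => A' n * t ^ n) (f t)) : A = A' := by
  set p := ofScalars ℝ (A - A')
  have hzero : ∀ t, t ≠ 0 → |t| < ε → HasSum (fun n => (A - A') n * t ^ n) 0 :=
    fun t h0 ht => by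
      simpa only [Pi.sub_apply, sub_mul, sub_self] using (hA t h0 ht).sub (hA' t h0 ht)
  have hrad : 0 < p.radius := by
    have hρ : |ε / 2| < ε := by rw [abs_of_pos (half_pos hε)]; linarith
    refine lt_of_lt_of_le ?_
      (le_radius_ofScalars_of_summable (hzero _ (half_pos hε).ne' hρ).summable)
    simpa using hε.ne'
  have hp := (p.hasFPowerSeriesOnBall hrad).hasFPowerSeriesAt
  have hpunct : ∀ᶠ t in 𝓝[≠] (0 : ℝ), p.sum t = 0 := by
    filter_upwards [self_mem_nhdsWithin, nhdsWithin_le_nhds (Metric.ball_mem_nhds 0 hε)]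
      with t h0 ht
    change ofScalarsSum (A - A') t = 0
    simp only [ofScalars_sum_eq, smul_eq_mul]
    exact (hzero t h0 (by simpa using ht)).tsum_eq
  have hnear : p.sum =ᶠ[𝓝 0] 0 :=
    (hp.analyticAt.frequently_eq_iff_eventually_eq analyticAt_const).mp hpunct.frequently
  exact sub_eq_zero.mp ((ofScalars_series_eq_zero _).mp (hp.congr hnear).eq_zero)

lemma HasSum.mul_exp_of_summable_norm {C : ℕ → ℝ} {t s : ℝ} (d : ℝ)
    (hs : HasSum (fun n => C n * t ^ n / (n ! : ℝ)) s)
    (habs : Summable fun n => ‖C n * t ^ n / (n ! : ℝ)‖) :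
    HasSum (fun n => (∑ i ∈ range (n + 1), n.choose i * C i * d ^ (n - i)) * t ^ n / (n ! : ℝ))
      (s * Real.exp (d * t)) := by
  have hexp : HasSum (fun n => (d * t) ^ n / (n ! : ℝ)) (Real.exp (d * t)) := by
    simpa only [Real.exp_eq_exp_ℝ] using NormedSpace.expSeries_div_hasSum_exp (d * t)
  have hprod := hasSum_sum_range_mul_of_summable_norm habs
    (Real.summable_pow_div_factorial (d * t)).norm
  rw [hs.tsum_eq, hexp.tsum_eq] at hprod
  refine hprod.congr_fun fun n => ?_
  rw [Finset.sum_mul, Finset.sum_div]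
  refine Finset.sum_congr rfl fun i hi => ?_
  have hi : i ≤ n := Finset.mem_range_succ_iff.mp hi
  rw [Nat.cast_choose ℝ hi, mul_pow, ← pow_mul_pow_sub t hi]
  field_simp

theorem statement9_general
    (r : ℕ) (k : Fin r → ℤ)
    (a b : ℝ)
    (B : ℝ → ℝ → ℕ → ℝ)
    (hB : ∀ c : ℝ, 0 < c → ∀ x : ℝ, ∃ ε > 0, ∀ t : ℝ, t ≠ 0 → |t| < ε →
      HasSum (fun n : ℕ => B c x n * t ^ n / (n ! : ℝ))
        (multiPolylog r k (1 - (a * b) ^ (-t)) / (b ^ t - a ^ (-t)) ^ r *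
          c ^ ((r : ℝ) * x * t)))
    (c : ℝ) (hc : 0 < c) (x y : ℝ) (n : ℕ) :
    B c (x + y) n = ∑ i ∈ Finset.range (n + 1),
      (n.choose i : ℝ) * ((r : ℝ) * Real.log c) ^ (n - i) * B c x i * y ^ (n - i) := by
  obtain ⟨ε₁, hε₁, H₁⟩ := hB c hc (x + y)
  obtain ⟨ε₂, hε₂, H₂⟩ := hB c hc x
  set d := r * Real.log c * y
  have hshift : ∀ t, c ^ ((r : ℝ) * x * t) * Real.exp (d * t) = c ^ ((r : ℝ) * (x + y) * t) := by
    intro t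
    rw [Real.rpow_def_of_pos hc, Real.rpow_def_of_pos hc, ← Real.exp_add]
    congr 1
    ring
  have habs : ∀ t, |t| < ε₂ / 2 → Summable fun m => ‖B c x m * t ^ m / (m ! : ℝ)‖ := by
    intro t ht
    have hρ : |ε₂ / 2| < ε₂ := by rw [abs_of_pos (half_pos hε₂)]; linarith
    have hsum := (H₂ _ (half_pos hε₂).ne' hρ).summable
    simp only [← div_mul_eq_mul_div] at hsum ⊢
    exact summable_norm_mul_pow_of_abs_lt hsum (by rwa [abs_of_pos (half_pos hε₂)])
  have hconv : ∀ t, t ≠ 0 → |t| < min ε₁ (ε₂ / 2) → HasSum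
      (fun m => (∑ i ∈ range (m + 1), m.choose i * B c x i * d ^ (m - i)) / m ! * t ^ m)
      (multiPolylog r k (1 - (a * b) ^ (-t)) / (b ^ t - a ^ (-t)) ^ r *
          c ^ ((r : ℝ) * (x + y) * t)) := by
    intro t ht0 ht
    have ht₂ : |t| < ε₂ / 2 := ht.trans_le (min_le_right _ _)
    have := (H₂ t ht0 (by linarith)).mul_exp_of_summable_norm d (habs t ht₂)
    rw [mul_assoc, hshift] at this
    simpa only [div_mul_eq_mul_div] using this
  have hcoeff := congrFun (eq_of_hasSum_mul_pow_of_ne_zero (A := fun m => B c (x + y) m / m !)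
    (lt_min hε₁ (half_pos hε₂))
    (fun t ht0 ht => by
      simpa only [div_mul_eq_mul_div] using H₁ t ht0 (ht.trans_le (min_le_left _ _)))
    hconv) n
  rw [div_left_inj' (by positivity)] at hcoeff
  rw [hcoeff]
  refine Finset.sum_congr rfl fun i _ => ?_
  rw [mul_pow]
  ring

/-- Addition formula: `B_n^{(k_1,…,k_r)}(x+y;a,b,c) =
∑_{i=0}^{n} C(n,i) (r ln c)^{n-i} B_i^{(k_1,…,k_r)}(x;a,b,c) y^{n-i}`. -/
theorem statement9
    (r : ℕ) (hr : 1 ≤ r) (k : Fin r → ℤ)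
    (a b : ℝ) (ha : 0 < a) (hb : 0 < b) (hab : 1 < a * b)
    (B : ℝ → ℝ → ℕ → ℝ)
    (hB : ∀ c : ℝ, 0 < c → ∀ x : ℝ, ∃ ε > 0, ∀ t : ℝ, t ≠ 0 → |t| < ε →
      HasSum (fun n : ℕ => B c x n * t ^ n / (n ! : ℝ))
        (multiPolylog r k (1 - (a * b) ^ (-t)) / (b ^ t - a ^ (-t)) ^ r *
          c ^ ((r : ℝ) * x * t)))
    (c : ℝ) (hc : 0 < c) (x y : ℝ) (n : ℕ) :
    B c (x + y) n = ∑ i ∈ Finset.range (n + 1),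
      (n.choose i : ℝ) * ((r : ℝ) * Real.log c) ^ (n - i) * B c x i * y ^ (n - i) :=
  statement9_general r k a b B hB c hc x y n
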